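/- Let L be a number field, U a finite set of primes of 𝒪_L making 𝒪_{LU} a PID and containing the primes where the Weierstrass coefficients or the x-coordinates x(T) of nonzero m-torsion points T fail to be integral. Let P ∈ E(L), and let R, R' ∈ [m]^{-1}P be distinct points with coordinates in L, neither U-integral, and write x(R) = A_R/B_R², x(R') = A_{R'}/B_{R'}² in lowest terms in 𝒪_{LU}. Then B_R and B_{R'} are coprime in 𝒪_{LU}. -/

import Mathlib

open WeierstrassCurve Polynomial
open scoped WeierstrassCurve.Affine

/-- The x-coordinate of a nonsingular point, with junk value `0` at the point at infinity. -/
noncomputable def ptx {F : Type*} [Field F] {W : WeierstrassCurve.Affine F} :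
    W.Point → F
  | .zero => 0
  | @WeierstrassCurve.Affine.Point.some _ _ _ x _ _ => x

/-- The y-coordinate of a nonsingular point, with junk value `0` at the point at infinity. -/
noncomputable def pty {F : Type*} [Field F] {W : WeierstrassCurve.Affine F} :
    W.Point → F
  | .zero => 0
  | @WeierstrassCurve.Affine.Point.some _ _ _ _ y _ => y

/-- Two points on (possibly different) Weierstrass curves over the same field agree. -/
def SamePt {F : Type*} [Field F] {W₁ W₂ : WeierstrassCurve.Affine F}
    (P : W₁.Point) (Q : W₂.Point) : Prop :=
  ptx P = ptx Q ∧ pty P = pty Q ∧ (P = .zero ↔ Q = .zero)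

open Classical in
/-- An isogeny (with base `L` and fixed algebraic closure `Ω`): a surjective, Galois-equivariant
group homomorphism on `Ω`-points with finite kernel. -/
structure Isogeny (L : Type*) [Field L] (Ω : Type*) [Field Ω] [Algebra L Ω]
    (W' W : WeierstrassCurve L) where
  hom : (W'⁄Ω).Point →+ (W⁄Ω).Point
  surjective : Function.Surjective hom
  finiteKer : Set.Finite {Q : (W'⁄Ω).Point | hom Q = 0}
  equivariant : ∀ σ : Ω ≃ₐ[L] Ω, ∀ Q : (W'⁄Ω).Point,
    hom (WeierstrassCurve.Affine.Point.map (W' := W') σ.toAlgHom Q) =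
      WeierstrassCurve.Affine.Point.map (W' := W) σ.toAlgHom (hom Q)

/-- The degree of a (separable) isogeny: the size of its kernel. -/
noncomputable def Isogeny.degree {L : Type*} [Field L] {Ω : Type*} [Field Ω] [Algebra L Ω]
    {W' W : WeierstrassCurve L} (φ : Isogeny L Ω W' W) : ℕ :=
  Nat.card {Q : (W'⁄Ω).Point | φ.hom Q = 0}

/-!
Let `T = R' - R`, a nonzero `m`-torsion point, so `x(T)` is `U`-integral, and so is `y(T)`, being
a root of a monic quadratic over `𝒪_{LU}`. Writing `x(R) = A/B²`, the quantity `y(R) B³` is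
likewise `U`-integral, and the addition formula shows that `x(R + T) (A - x(T) B²)²` is
`U`-integral. As `R + T = R'`, `B'` divides `A' (A - x(T) B²)²`; since `B'` is coprime to `A'`,
it divides `(A - x(T) B²)²`, which is coprime to `B` because `A` is.
-/

theorem Valuation.le_one_of_sq_eq_mul_add {R Γ₀ : Type*} [CommRing R]
    [LinearOrderedCommGroupWithZero Γ₀] (v : Valuation R Γ₀) {c s t : R}
    (hs : v s ≤ 1) (ht : v t ≤ 1) (h : c ^ 2 = s * c + t) : v c ≤ 1 := by
  by_contra! hc
  have hsq : v c * v c ≤ v c := calc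
    v c * v c = v (s * c + t) := by rw [← h, map_pow, sq]
    _ ≤ max (v s * v c) (v t) := by rw [← map_mul]; exact v.map_add _ _
    _ ≤ v c := max_le (mul_le_of_le_one_left' hs) (ht.trans hc.le)
  exact (hsq.trans_lt (lt_mul_of_one_lt_right (zero_lt_one.trans hc) hc)).false

theorem Set.mem_integer_of_sq_eq_mul_add {R : Type*} [CommRing R] [IsDedekindDomain R]
    (S : Set (IsDedekindDomain.HeightOneSpectrum R)) {K : Type*} [Field K] [Algebra R K]
    [IsFractionRing R K] {c s t : K} (hs : s ∈ S.integer K) (ht : t ∈ S.integer K)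
    (h : c ^ 2 = s * c + t) : c ∈ S.integer K :=
  fun v hv => (v.valuation K).le_one_of_sq_eq_mul_add (hs v hv) (ht v hv) h

theorem IsCoprime.of_dvd_mul_pow {R : Type*} [CommRing R] {a b c d : R} {n : ℕ}
    (hcb : IsCoprime c b) (had : IsCoprime a d) (hd : d ∣ a * c ^ n) : IsCoprime b d :=
  (hcb.pow_left.of_isCoprime_of_dvd_left (had.symm.dvd_of_dvd_mul_left hd)).symm

namespace WeierstrassCurve.Affine

variable {K : Type*} [Field K] {W : Affine K}

theorem addX_mul_sq_mem [DecidableEq K] {T : Type*} [SetLike T K] [SubringClass T K] {O : T}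
    (hW : W.a₁ ∈ O ∧ W.a₂ ∈ O ∧ W.a₃ ∈ O ∧ W.a₄ ∈ O ∧ W.a₆ ∈ O) {x y u w B : K}
    (h : W.Equation x y) (hxu : x ≠ u) (hu : u ∈ O) (hw : w ∈ O) (hB : B ∈ O)
    (hA : x * B ^ 2 ∈ O) (hc : y * B ^ 3 ∈ O) :
    W.addX x u (W.slope x u y w) * (x * B ^ 2 - u * B ^ 2) ^ 2 ∈ O := by
  obtain ⟨ha₁, ha₂, ha₃, ha₄, ha₆⟩ := hW
  set A := x * B ^ 2
  set c := y * B ^ 3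
  -- `(A - u B²)² = B⁴ (x - u)²` clears the slope's denominator; the curve equation removes `y²`
  have key : W.addX x u (W.slope x u y w) * (A - u * B ^ 2) ^ 2 =
      (A + u * B ^ 2) * u * A + W.a₂ * u * B ^ 2 * (2 * A - u * B ^ 2) + W.a₄ * A * B ^ 2
        - W.a₁ * w * B ^ 2 * (A - u * B ^ 2) - (W.a₃ + W.a₁ * u + 2 * w) * B * c
        + (w ^ 2 + W.a₆ - u ^ 3) * B ^ 4 := by
    rw [equation_iff] at h
    rw [slope_of_X_ne hxu, addX]
    have : x - u ≠ 0 := sub_ne_zero.mpr hxu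
    field_simp
    linear_combination B ^ 4 * (x - u) ^ 2 * h
  rw [key]
  repeat
    first
    | assumption
    | apply add_mem | apply sub_mem | apply mul_mem | apply pow_mem | apply ofNat_mem

section SInteger

variable {R : Type*} [CommRing R] [IsDedekindDomain R]
  {S : Set (IsDedekindDomain.HeightOneSpectrum R)} [Algebra R K] [IsFractionRing R K]
  (hW : W.a₁ ∈ S.integer K ∧ W.a₂ ∈ S.integer K ∧ W.a₃ ∈ S.integer K ∧ W.a₄ ∈ S.integer K ∧
    W.a₆ ∈ S.integer K)
include hW

theorem Y_mul_pow_three_mem_integer {x y B : K} (h : W.Equation x y) (hB : B ∈ S.integer K)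
    (hA : x * B ^ 2 ∈ S.integer K) : y * B ^ 3 ∈ S.integer K := by
  obtain ⟨ha₁, ha₂, ha₃, ha₄, ha₆⟩ := hW
  set A := x * B ^ 2
  rw [equation_iff] at h
  refine S.mem_integer_of_sq_eq_mul_add (s := -((W.a₁ * A + W.a₃ * B ^ 2) * B))
    (t := A ^ 3 + W.a₂ * A ^ 2 * B ^ 2 + W.a₄ * A * B ^ 4 + W.a₆ * B ^ 6) ?_ ?_ ?_
  · repeat first | assumption | apply neg_mem | apply add_mem | apply mul_mem | apply pow_mem
  · repeat first | assumption | apply add_mem | apply mul_mem | apply pow_mem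
  · linear_combination B ^ 6 * h

theorem ptx_add_mul_sq_mem_integer [DecidableEq K] {P Q : W.Point} (hQ : Q ≠ 0)
    (hQint : ptx Q ∈ S.integer K) (hPint : ptx P ∉ S.integer K) {A B : K}
    (hA : A ∈ S.integer K) (hB : B ∈ S.integer K) (hP : ptx P = A / B ^ 2) :
    ptx (P + Q) * (A - ptx Q * B ^ 2) ^ 2 ∈ S.integer K := by
  rcases P with _ | @⟨x, y, hxy⟩
  · exact absurd (zero_mem _) hPint
  rcases Q with _ | @⟨u, w, huw⟩
  · exact (hQ rfl).elim
  simp only [ptx] at hP hPint hQint ⊢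
  have hxu : x ≠ u := fun h => hPint (h ▸ hQint)
  have hB0 : B ≠ 0 := by rintro rfl; simp [hP] at hPint
  have hxB : x * B ^ 2 = A := by rw [hP]; field_simp
  have hw : w ∈ S.integer K := by
    simpa using Y_mul_pow_three_mem_integer hW huw.1 (one_mem _) (by simpa using hQint)
  have hc := Y_mul_pow_three_mem_integer hW hxy.1 hB (hxB ▸ hA)
  rw [Point.add_of_X_ne hxu, ← hxB]
  exact addX_mul_sq_mem hW hxy.1 hxu hQint hw hB (hxB ▸ hA) hc

end SInteger

end WeierstrassCurve.Affine

open Classical in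
theorem denominators_coprime_general {L : Type*} [Field L] [NumberField L]
    (U : Set (IsDedekindDomain.HeightOneSpectrum (NumberField.RingOfIntegers L)))
    (W : WeierstrassCurve L)
    (hcoeff : W.a₁ ∈ U.integer L ∧ W.a₂ ∈ U.integer L ∧
      W.a₃ ∈ U.integer L ∧ W.a₄ ∈ U.integer L ∧ W.a₆ ∈ U.integer L)
    (m : ℕ)
    (htors : ∀ T : (W⁄L).Point, T ≠ 0 → m • T = 0 → ptx T ∈ U.integer L)
    (P : (W⁄L).Point) (R R' : (W⁄L).Point) (hne : R ≠ R')
    (hR : m • R = P) (hR' : m • R' = P)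
    (hRnotint : ptx R ∉ U.integer L)
    (hR'notint : ptx R' ∉ U.integer L)
    (A B : U.integer L) (hAB : IsCoprime A B)
    (hxR : ptx R = (A : L) / (B : L) ^ 2)
    (A' B' : U.integer L) (hAB' : IsCoprime A' B')
    (hxR' : ptx R' = (A' : L) / (B' : L) ^ 2) :
    IsCoprime B B' := by
  set T := R' - R
  have hT0 : T ≠ 0 := sub_ne_zero.mpr hne.symm
  have hTm : m • T = 0 := by rw [smul_sub, hR, hR', sub_self]
  have hW : (W⁄L).a₁ ∈ U.integer L ∧ (W⁄L).a₂ ∈ U.integer L ∧ (W⁄L).a₃ ∈ U.integer L ∧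
      (W⁄L).a₄ ∈ U.integer L ∧ (W⁄L).a₆ ∈ U.integer L := by
    simpa using hcoeff
  have hmem := Affine.ptx_add_mul_sq_mem_integer hW hT0 (htors T hT0 hTm) hRnotint A.2 B.2 hxR
  obtain ⟨u, hu⟩ : ∃ u : U.integer L, (u : L) = ptx T := ⟨⟨_, htors T hT0 hTm⟩, rfl⟩
  rw [add_sub_cancel, hxR', ← hu] at hmem
  have hB' : (B' : L) ≠ 0 := fun h => hR'notint (by simp [hxR', h])
  have hdvd : B' ∣ A' * (A - u * B ^ 2) ^ 2 :=
    ⟨⟨_, hmem⟩ * B', Subtype.ext (by push_cast; field_simp)⟩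
  have hD : IsCoprime (A - u * B ^ 2) B := by
    have := hAB.add_mul_left_left (-(u * B))
    rwa [show A + B * -(u * B) = A - u * B ^ 2 by ring] at this
  exact hD.of_dvd_mul_pow hAB' hdvd

set_option maxHeartbeats 1000000 in
open Classical in
/-- let `L` be a number field and `U` a finite set of primes of `𝒪_L` such
that `𝒪_{LU}` is a PID, the Weierstrass coefficients are `U`-integral, and the
`x`-coordinates of nonzero `m`-torsion points are `U`-integral.  If `R ≠ R'` are points of
`[m]⁻¹P` with coordinates in `L`, neither `U`-integral, written in lowest terms as
`x(R) = A_R/B_R²`, `x(R') = A_{R'}/B_{R'}²` in `𝒪_{LU}`, then `B_R` and `B_{R'}` are coprime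
in `𝒪_{LU}`. -/
theorem denominators_coprime {L : Type*} [Field L] [NumberField L]
    (U : Set (IsDedekindDomain.HeightOneSpectrum (NumberField.RingOfIntegers L)))
    (hUfin : U.Finite)
    (W : WeierstrassCurve L) [W.IsElliptic]
    (hPID : IsPrincipalIdealRing (U.integer L))
    (hcoeff : W.a₁ ∈ U.integer L ∧ W.a₂ ∈ U.integer L ∧
      W.a₃ ∈ U.integer L ∧ W.a₄ ∈ U.integer L ∧ W.a₆ ∈ U.integer L)
    (m : ℕ) (hm : 2 ≤ m)
    (htors : ∀ T : (W⁄L).Point, T ≠ 0 → m • T = 0 → ptx T ∈ U.integer L)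
    (P : (W⁄L).Point) (R R' : (W⁄L).Point) (hne : R ≠ R')
    (hR : m • R = P) (hR' : m • R' = P)
    (hRnotint : ptx R ∉ U.integer L)
    (hR'notint : ptx R' ∉ U.integer L)
    (A B : U.integer L) (hAB : IsCoprime A B)
    (hxR : ptx R = (A : L) / (B : L) ^ 2)
    (A' B' : U.integer L) (hAB' : IsCoprime A' B')
    (hxR' : ptx R' = (A' : L) / (B' : L) ^ 2) :
    IsCoprime B B' :=
  denominators_coprime_general U W hcoeff m htors P R R' hne hR hR' hRnotint hR'notint A B hAB hxR
    A' B' hAB' hxR'
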